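/- arXiv:2101.02329 — 5 statements merged into one kernel-verified Lean document; each statement's English description precedes it below -/
import Mathlib

section
/- For any finite poset P, the rowmotion map row : A(P) → A(P), defined by row(A) = min{x ∈ P : x ≰ y for all y ∈ A}, sends antichains to antichains and is a bijection on the set of antichains of P. -/
open scoped Classical

variable {α : Type*}

noncomputable def toggle [PartialOrder α] (p : α) (A : Finset α) : Finset α :=
  if p ∈ A then A.erase p
  else if IsAntichain (· ≤ ·) (↑(insert p A) : Set α) then insert p A
  else A

noncomputable def rowmotion [Fintype α] [PartialOrder α] (A : Finset α) : Finset α :=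
  Finset.univ.filter
    (fun x => (∀ y ∈ A, ¬ x ≤ y) ∧ ∀ z : α, (∀ y ∈ A, ¬ z ≤ y) → z ≤ x → z = x)

noncomputable def rankToggle [Fintype α] [PartialOrder α] (rk : α → ℕ) (i : ℕ)
    (A : Finset α) : Finset α :=
  (Finset.univ.filter (fun p => rk p = i)).toList.foldr toggle A

noncomputable def rvac [Fintype α] [PartialOrder α] (rk : α → ℕ) (N : ℕ)
    (A : Finset α) : Finset α :=
  (List.range (N + 1)).foldl
    (fun B k => (List.range' k (N + 1 - k)).foldl (fun C j => rankToggle rk j C) B) A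

def IsRankFunction [PartialOrder α] (rk : α → ℕ) : Prop :=
  (∀ p : α, (∀ q : α, ¬ q < p) → rk p = 0) ∧ ∀ x y : α, x ⋖ y → rk y = rk x + 1

/-!
Rowmotion is the composite of three bijections of a finite poset: an antichain `A` goes to its
lower closure, a lower set to its complement, and an upper set to its set of minimal elements.
The first and last are invertible because an antichain is the set of maximal elements of its
lower closure, and an upper set is the upper closure of its minimal elements; so the inverse of
rowmotion sends `B` to the maximal elements of the complement of the upper closure of `B`.
-/

section WellFounded
variable {β : Type*} [PartialOrder β] {s : Set β}

lemma IsUpperSet.upperClosure_setOf_minimal [WellFoundedLT β] (hs : IsUpperSet s) :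
    (upperClosure {x | Minimal (· ∈ s) x} : Set β) = s := by
  ext x
  refine ⟨fun ⟨a, ha, hax⟩ => hs hax ha.prop, fun hx => ?_⟩
  obtain ⟨a, hax, ha⟩ := exists_minimal_le_of_wellFoundedLT (· ∈ s) x hx
  exact ⟨a, ha, hax⟩

lemma IsLowerSet.lowerClosure_setOf_maximal [WellFoundedGT β] (hs : IsLowerSet s) :
    (lowerClosure {x | Maximal (· ∈ s) x} : Set β) = s := by
  ext x
  refine ⟨fun ⟨a, ha, hxa⟩ => hs hxa ha.prop, fun hx => ?_⟩
  obtain ⟨a, hxa, ha⟩ := exists_maximal_ge_of_wellFoundedGT (· ∈ s) x hx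
  exact ⟨a, ha, hxa⟩

end WellFounded

section Rowmotion
variable [Fintype α] [PartialOrder α]

lemma coe_rowmotion (A : Finset α) :
    (rowmotion A : Set α) = {x | Minimal (· ∈ (lowerClosure (A : Set α) : Set α)ᶜ) x} := by
  ext x
  simp [rowmotion, minimal_iff, eq_comm]

lemma isAntichain_rowmotion (A : Finset α) : IsAntichain (· ≤ ·) (rowmotion A : Set α) := by
  rw [coe_rowmotion]
  exact setOfPred_minimal_antichain _

lemma upperClosure_rowmotion (A : Finset α) :
    (upperClosure (rowmotion A : Set α) : Set α) = (lowerClosure (A : Set α) : Set α)ᶜ := by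
  rw [coe_rowmotion]
  exact (lowerClosure (A : Set α)).lower.compl.upperClosure_setOf_minimal

lemma rowmotion_injOn :
    Set.InjOn rowmotion {A : Finset α | IsAntichain (· ≤ ·) (A : Set α)} := by
  intro A hA B hB hAB
  have hcl : lowerClosure (A : Set α) = lowerClosure (B : Set α) := by
    apply SetLike.coe_injective
    rw [← compl_inj_iff, ← upperClosure_rowmotion, ← upperClosure_rowmotion, hAB]
  ext x
  rw [← Finset.mem_coe, ← Finset.mem_coe, ← hA.maximal_mem_lowerClosure_iff_mem,
    ← hB.maximal_mem_lowerClosure_iff_mem, hcl]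

lemma rowmotion_surjOn :
    Set.SurjOn rowmotion {A : Finset α | IsAntichain (· ≤ ·) (A : Set α)}
      {A : Finset α | IsAntichain (· ≤ ·) (A : Set α)} := by
  intro B hB
  set A := Finset.univ.filter fun x => Maximal (· ∈ (upperClosure (B : Set α) : Set α)ᶜ) x
  have hcl : (lowerClosure (A : Set α) : Set α) = (upperClosure (B : Set α) : Set α)ᶜ := by
    rw [Finset.coe_filter_univ]
    exact (upperClosure (B : Set α)).upper.compl.lowerClosure_setOf_maximal
  refine ⟨A, ?_, ?_⟩
  · rw [Set.mem_ofPred_eq, Finset.coe_filter_univ]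
    exact setOfPred_maximal_antichain _
  · apply Finset.coe_injective
    ext x
    rw [coe_rowmotion, hcl, compl_compl, Set.mem_ofPred_eq]
    exact hB.minimal_mem_upperClosure_iff_mem

end Rowmotion

theorem rowmotion_bijection [Fintype α] [PartialOrder α] :
    (∀ A : Finset α, IsAntichain (· ≤ ·) (↑A : Set α) →
      IsAntichain (· ≤ ·) (↑(rowmotion A) : Set α)) ∧
    Set.BijOn rowmotion {A : Finset α | IsAntichain (· ≤ ·) (↑A : Set α)}
      {A : Finset α | IsAntichain (· ≤ ·) (↑A : Set α)} :=
  ⟨fun A _ => isAntichain_rowmotion A,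
    ⟨fun A _ => isAntichain_rowmotion A, rowmotion_injOn, rowmotion_surjOn⟩⟩
end

section
/- For any finite poset P and any linear extension p_1, p_2, …, p_n of P, rowmotion equals the composition of toggles τ_{p_n} ∘ τ_{p_{n-1}} ∘ ⋯ ∘ τ_{p_1}; that is, applying toggles at all elements in the order of a linear extension computes rowmotion on antichains. -/
open scoped Classical

variable {α : Type*}

/-!
Toggling the elements of a linear extension one by one, the state after the elements of a lower
set `S` have been toggled is `row A` on `S` and `A` off `S`. The invariant survives toggling the
next element `p`: its strict down-set already lies in `S`, so `τ_p` removes `p` if `p ∈ A`, and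
otherwise adds `p` exactly when `p` is a minimal element not below `A`, i.e. when `p ∈ row A`.
-/

section Rowmotion

variable [Fintype α] [PartialOrder α]

lemma mem_rowmotion {A : Finset α} {x : α} :
    x ∈ rowmotion A ↔ Minimal (fun z => ∀ y ∈ A, ¬ z ≤ y) x := by
  simp only [rowmotion, Finset.mem_filter, Finset.mem_univ, true_and, minimal_iff]
  exact and_congr_right fun _ => forall_congr' fun z => by grind

lemma notMem_rowmotion_of_mem {A : Finset α} {x : α} (hx : x ∈ A) : x ∉ rowmotion A :=
  fun h => (mem_rowmotion.1 h).prop x hx le_rfl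

lemma exists_mem_rowmotion_le {A : Finset α} {x : α} (hx : ∀ y ∈ A, ¬ x ≤ y) :
    ∃ m ∈ rowmotion A, m ≤ x := by
  obtain ⟨m, hmx, hm⟩ := exists_minimal_le_of_wellFoundedLT (fun z => ∀ y ∈ A, ¬ z ≤ y) x hx
  exact ⟨m, mem_rowmotion.2 hm, hmx⟩

noncomputable def rowmotionOn (S A : Finset α) : Finset α :=
  rowmotion A ∩ S ∪ A \ S

variable {S A : Finset α} {p : α}

@[simp] lemma rowmotionOn_empty : rowmotionOn ∅ A = A := by simp [rowmotionOn]

@[simp] lemma rowmotionOn_univ : rowmotionOn Finset.univ A = rowmotion A := by simp [rowmotionOn]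

lemma isAntichain_rowmotionOn (hA : IsAntichain (· ≤ ·) (A : Set α))
    (hS : IsLowerSet (S : Set α)) : IsAntichain (· ≤ ·) (rowmotionOn S A : Set α) := by
  intro x hx y hy hne hle
  simp only [rowmotionOn, Finset.coe_union, Finset.coe_inter, Finset.coe_sdiff, Set.mem_union,
    Set.mem_inter_iff, Set.mem_sdiff, Finset.mem_coe] at hx hy
  rcases hx with ⟨hxR, hxS⟩ | ⟨hxA, hxS⟩ <;> rcases hy with ⟨hyR, hyS⟩ | ⟨hyA, hyS⟩
  · exact isAntichain_rowmotion A hxR hyR hne hle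
  · exact (mem_rowmotion.1 hxR).prop y hyA hle
  · exact hxS (hS hle hyS)
  · exact hA hxA hyA hne hle

lemma toggle_rowmotionOn_of_mem (hpS : p ∉ S) (hpA : p ∈ A) :
    toggle p (rowmotionOn S A) = rowmotionOn (insert p S) A := by
  have hpR := notMem_rowmotion_of_mem hpA
  rw [toggle, if_pos (by simp [rowmotionOn, hpA, hpS])]
  ext x
  simp only [rowmotionOn, Finset.mem_erase, Finset.mem_union, Finset.mem_inter,
    Finset.mem_sdiff, Finset.mem_insert]
  grind

lemma toggle_rowmotionOn_of_mem_rowmotion (hA : IsAntichain (· ≤ ·) (A : Set α))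
    (hS : IsLowerSet (S : Set α)) (hpS : p ∉ S) (hbelow : ∀ q < p, q ∈ S)
    (hpR : p ∈ rowmotion A) :
    toggle p (rowmotionOn S A) = rowmotionOn (insert p S) A := by
  have hpA : p ∉ A := fun h => notMem_rowmotion_of_mem h hpR
  have hanti : IsAntichain (· ≤ ·) (insert p (rowmotionOn S A : Set α)) := by
    refine isAntichain_insert.2 ⟨isAntichain_rowmotionOn hA hS, fun b hb hne => ?_⟩
    simp only [rowmotionOn, Finset.coe_union, Finset.coe_inter, Finset.coe_sdiff, Set.mem_union,
      Set.mem_inter_iff, Set.mem_sdiff, Finset.mem_coe] at hb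
    rcases hb with ⟨hbR, -⟩ | ⟨hbA, hbS⟩
    · exact ⟨isAntichain_rowmotion A hpR hbR hne, isAntichain_rowmotion A hbR hpR hne.symm⟩
    · exact ⟨(mem_rowmotion.1 hpR).prop b hbA,
        fun hle => hbS (hbelow b (lt_of_le_of_ne hle hne.symm))⟩
  rw [toggle, if_neg (by simp [rowmotionOn, hpA, hpS]), if_pos (by simpa using hanti)]
  ext x
  simp only [rowmotionOn, Finset.mem_insert, Finset.mem_union, Finset.mem_inter,
    Finset.mem_sdiff]
  grind

lemma toggle_rowmotionOn_of_notMem (hS : IsLowerSet (S : Set α)) (hpS : p ∉ S)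
    (hbelow : ∀ q < p, q ∈ S) (hpA : p ∉ A) (hpR : p ∉ rowmotion A) :
    toggle p (rowmotionOn S A) = rowmotionOn (insert p S) A := by
  -- `p` is blocked by an element of `A` above it, or by an element of `row A` below it.
  have hcomparable : ∃ b ∈ rowmotionOn S A, b ≠ p ∧ (b ≤ p ∨ p ≤ b) := by
    by_cases hp : ∀ y ∈ A, ¬ p ≤ y
    · obtain ⟨m, hmR, hmp⟩ := exists_mem_rowmotion_le hp
      have hlt : m < p := lt_of_le_of_ne hmp (by rintro rfl; exact hpR hmR)
      exact ⟨m, by simp [rowmotionOn, hmR, hbelow m hlt], hlt.ne, Or.inl hmp⟩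
    · push Not at hp
      obtain ⟨y, hyA, hpy⟩ := hp
      have hyS : y ∉ S := fun h => hpS (hS hpy h)
      exact ⟨y, by simp [rowmotionOn, hyA, hyS], by rintro rfl; exact hpA hyA, Or.inr hpy⟩
  have hnot : ¬ IsAntichain (· ≤ ·) (insert p (rowmotionOn S A : Set α)) := by
    obtain ⟨b, hb, hne, hle | hle⟩ := hcomparable
    · exact fun h => h (Set.mem_insert_of_mem p hb) (Set.mem_insert p _) hne hle
    · exact fun h => h (Set.mem_insert p _) (Set.mem_insert_of_mem p hb) hne.symm hle
  rw [toggle, if_neg (by simp [rowmotionOn, hpA, hpR]), if_neg (by simpa using hnot)]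
  ext x
  simp only [rowmotionOn, Finset.mem_insert, Finset.mem_union, Finset.mem_inter,
    Finset.mem_sdiff]
  grind

lemma toggle_rowmotionOn (hA : IsAntichain (· ≤ ·) (A : Set α)) (hS : IsLowerSet (S : Set α))
    (hpS : p ∉ S) (hbelow : ∀ q < p, q ∈ S) :
    toggle p (rowmotionOn S A) = rowmotionOn (insert p S) A := by
  by_cases hpA : p ∈ A
  · exact toggle_rowmotionOn_of_mem hpS hpA
  by_cases hpR : p ∈ rowmotion A
  · exact toggle_rowmotionOn_of_mem_rowmotion hA hS hpS hbelow hpR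
  · exact toggle_rowmotionOn_of_notMem hS hpS hbelow hpA hpR

lemma foldl_toggle_rowmotionOn (hA : IsAntichain (· ≤ ·) (A : Set α)) {L : List α}
    (hL : L.Nodup) (hext : L.Pairwise (fun a b => ¬ b < a)) (hS : IsLowerSet (S : Set α))
    (hSL : IsLowerSet ((S ∪ L.toFinset : Finset α) : Set α)) (hdisj : Disjoint S L.toFinset) :
    L.foldl (fun B p => toggle p B) (rowmotionOn S A) = rowmotionOn (S ∪ L.toFinset) A := by
  induction L generalizing S with
  | nil => simp
  | cons p L ih =>
    obtain ⟨hpL, hL⟩ := List.nodup_cons.1 hL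
    obtain ⟨hpmin, hext⟩ := List.pairwise_cons.1 hext
    have hpS : p ∉ S := Finset.disjoint_right.1 hdisj (by simp)
    have hbelow : ∀ q < p, q ∈ S := by
      intro q hqp
      have hq : q ∈ S ∪ (p :: L).toFinset := hSL hqp.le (by simp)
      simp only [Finset.mem_union, List.mem_toFinset, List.mem_cons] at hq
      rcases hq with hqS | rfl | hqL
      · exact hqS
      · exact absurd hqp (lt_irrefl q)
      · exact absurd hqp (hpmin q hqL)
    have hS' : IsLowerSet ((insert p S : Finset α) : Set α) := by
      intro a b hba ha
      simp only [Finset.coe_insert, Set.mem_insert_iff, Finset.mem_coe] at ha ⊢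
      rcases ha with rfl | haS
      · exact hba.eq_or_lt.imp id (hbelow b)
      · exact Or.inr (hS hba haS)
    have hunion : S ∪ (p :: L).toFinset = insert p S ∪ L.toFinset := by
      ext; simp
    rw [List.foldl_cons, toggle_rowmotionOn hA hS hpS hbelow, hunion]
    refine ih hL hext hS' (hunion ▸ hSL) ?_
    simp only [Finset.disjoint_insert_left, List.mem_toFinset]
    exact ⟨hpL, Finset.disjoint_of_subset_right (by simp) hdisj⟩

end Rowmotion

theorem rowmotion_eq_toggles [Fintype α] [PartialOrder α] (L : List α)
    (hmem : ∀ a : α, a ∈ L) (hnodup : L.Nodup)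
    (hext : L.Pairwise (fun a b => ¬ b < a))
    (A : Finset α) (hA : IsAntichain (· ≤ ·) (↑A : Set α)) :
    rowmotion A = L.foldl (fun B p => toggle p B) A := by
  have hL : L.toFinset = Finset.univ := Finset.eq_univ_of_forall fun a => by simp [hmem]
  have h := foldl_toggle_rowmotionOn hA hnodup hext (S := ∅) (by simpa using isLowerSet_empty)
    (by simpa [hL] using isLowerSet_univ) (by simp)
  simpa [hL] using h.symm
end

section
/- For any finite ranked poset P, the rowvacuation operator Rvac is an involution on the set of antichains of P. -/
open scoped Classical

variable {α : Type*}

/-!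
Write `I(A) = (upperClosure A)ᶜ`, a bijection from antichains to order ideals (`A` is recovered
as the minimal elements of `I(A)ᶜ`), and `t_j` for the order-ideal toggle at rank `j`. Antichain
rank toggles do not commute even at far apart ranks, but a whole sweep `𝛕_N ⋯ 𝛕_k` is conjugate
under `I` to the sweep `t_k ⋯ t_N`: both send `A` to the ideal `sweepIdeal rk k A`, which agrees
with `I(A)` below rank `k` and with the lower closure of `A` from rank `k` on, and each step of
the induction on `k` is a local computation at rank `k`. Hence `Rvac` is conjugate to the
evacuation word `(t_N)(t_{N-1} t_N) ⋯ (t_0 ⋯ t_N)`. The `t_j` are involutions that commute at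
distance at least two, and in any group such generators make the evacuation word an involution:
with `E_k` the evacuation word on ranks `k, …, N` and `S_k = t_k ⋯ t_N`, downward induction gives
`S_k E_{k+1} = E_{k+1} S_k⁻¹`, so `E_k² = E_{k+1} S_k E_{k+1} S_k = E_{k+1}² = 1`.
-/

open scoped symmDiff

section Evacuation

variable {G : Type*} [Group G]

def sweepProd (g : ℕ → G) : ℕ → ℕ → G
  | _, 0 => 1
  | k, n + 1 => g k * sweepProd g (k + 1) n

def evacProd (g : ℕ → G) : ℕ → ℕ → G
  | _, 0 => 1
  | k, n + 1 => evacProd g (k + 1) n * sweepProd g k (n + 1)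

variable {g : ℕ → G}

lemma commute_sweepProd {a : G} {k : ℕ} (h : ∀ j, k ≤ j → Commute a (g j)) (n : ℕ) :
    Commute a (sweepProd g k n) := by
  induction n generalizing k with
  | zero => exact Commute.one_right a
  | succ n ih => exact (h k le_rfl).mul_right (ih fun j hj => h j (by omega))

lemma commute_evacProd {a : G} {k : ℕ} (h : ∀ j, k ≤ j → Commute a (g j)) (n : ℕ) :
    Commute a (evacProd g k n) := by
  induction n generalizing k with
  | zero => exact Commute.one_right a
  | succ n ih => exact (ih fun j hj => h j (by omega)).mul_right (commute_sweepProd h _)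

variable (hinv : ∀ j, g j * g j = 1) (hcomm : ∀ i j, i + 2 ≤ j → Commute (g i) (g j))
include hinv hcomm

lemma sweepProd_mul_evacProd (k n : ℕ) :
    sweepProd g k (n + 1) * evacProd g (k + 1) n =
      evacProd g (k + 1) n * (sweepProd g k (n + 1))⁻¹ := by
  induction n generalizing k with
  | zero => simp [sweepProd, evacProd, inv_eq_of_mul_eq_one_right (hinv k)]
  | succ n ih =>
    have hcomm_k : Commute (g k) (evacProd g (k + 2) n) :=
      commute_evacProd (fun j hj => hcomm k j hj) n
    calc sweepProd g k (n + 2) * evacProd g (k + 1) (n + 1)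
        = g k * (sweepProd g (k + 1) (n + 1) * evacProd g (k + 2) n) *
            sweepProd g (k + 1) (n + 1) := by simp only [sweepProd, evacProd, mul_assoc]
      _ = g k * evacProd g (k + 2) n := by rw [ih]; group
      _ = evacProd g (k + 2) n * (g k)⁻¹ := by rw [hcomm_k.eq, inv_eq_of_mul_eq_one_right (hinv k)]
      _ = evacProd g (k + 1) (n + 1) * (sweepProd g k (n + 2))⁻¹ := by
        simp only [sweepProd, evacProd]; group

lemma evacProd_mul_self (k n : ℕ) : evacProd g k n * evacProd g k n = 1 := by
  induction n generalizing k with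
  | zero => simp [evacProd]
  | succ n ih =>
    calc evacProd g k (n + 1) * evacProd g k (n + 1)
        = evacProd g (k + 1) n * (sweepProd g k (n + 1) * evacProd g (k + 1) n) *
            sweepProd g k (n + 1) := by simp only [evacProd, mul_assoc]
      _ = 1 := by rw [sweepProd_mul_evacProd hinv hcomm, ← ih (k + 1)]; group

end Evacuation

lemma strictMono_of_covBy_succ [Fintype α] [PartialOrder α] {rk : α → ℕ}
    (hcov : ∀ x y : α, x ⋖ y → rk y = rk x + 1) : StrictMono rk :=
  letI := Fintype.toLocallyFiniteOrder (α := α)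
  (strictMono_iff_forall_covBy rk).2 fun x y h => by rw [hcov x y h]; omega

section IdealToggle

variable [PartialOrder α] (rk : α → ℕ)

/-- Toggleability is tested on covers only: this agrees with the usual order-ideal toggle on
lower sets, and makes `idealRankToggle rk j` an involution of all of `Set α` that commutes with
`idealRankToggle rk i` whenever `|i - j| ≥ 2`. -/
def idealToggleSet (j : ℕ) (I : Set α) : Set α :=
  {x | rk x = j ∧ (∀ y, x ⋖ y → y ∉ I) ∧ ∀ y, y ⋖ x → y ∈ I}

def idealRankToggle (j : ℕ) (I : Set α) : Set α := I ∆ idealToggleSet rk j I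

variable {rk}

lemma mem_idealRankToggle_of_ne {j : ℕ} {I : Set α} {x : α} (hx : rk x ≠ j) :
    x ∈ idealRankToggle rk j I ↔ x ∈ I := by
  simp [idealRankToggle, Set.mem_symmDiff, idealToggleSet, hx]

lemma idealToggleSet_symmDiff {i j : ℕ} {I T : Set α} (hT : ∀ x ∈ T, rk x = j)
    (hij : ∀ x y, x ⋖ y → (rk x = i → rk y ≠ j) ∧ (rk y = i → rk x ≠ j)) :
    idealToggleSet rk i (I ∆ T) = idealToggleSet rk i I := by
  ext x
  simp only [idealToggleSet, Set.mem_ofPred_eq, and_congr_right_iff]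
  intro hx
  have hup : ∀ y, x ⋖ y → (y ∈ I ∆ T ↔ y ∈ I) := fun y hy => by
    have := mt (hT y) ((hij x y hy).1 hx)
    simp [Set.mem_symmDiff, this]
  have hdown : ∀ y, y ⋖ x → (y ∈ I ∆ T ↔ y ∈ I) := fun y hy => by
    have := mt (hT y) ((hij y x hy).2 hx)
    simp [Set.mem_symmDiff, this]
  exact and_congr (forall₂_congr fun y hy => not_congr (hup y hy))
    (forall₂_congr fun y hy => hdown y hy)

lemma idealRankToggle_involutive (hrk : StrictMono rk) (j : ℕ) :
    Function.Involutive (idealRankToggle rk j) := fun I => by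
  have hij : ∀ x y : α, x ⋖ y → (rk x = j → rk y ≠ j) ∧ (rk y = j → rk x ≠ j) :=
    fun x y h => have := hrk h.lt; ⟨by omega, by omega⟩
  rw [idealRankToggle, idealRankToggle, idealToggleSet_symmDiff (fun x hx => hx.1) hij,
    symmDiff_symmDiff_cancel_right]

lemma idealRankToggle_comm (hcov : ∀ x y : α, x ⋖ y → rk y = rk x + 1) {i j : ℕ}
    (hij : i + 2 ≤ j) (I : Set α) :
    idealRankToggle rk i (idealRankToggle rk j I) =
      idealRankToggle rk j (idealRankToggle rk i I) := by
  have hfar : ∀ a b, a + 2 ≤ b ∨ b + 2 ≤ a →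
      ∀ x y : α, x ⋖ y → (rk x = a → rk y ≠ b) ∧ (rk y = a → rk x ≠ b) :=
    fun a b hab x y h => have := hcov x y h; ⟨by omega, by omega⟩
  rw [idealRankToggle, idealRankToggle, idealRankToggle, idealRankToggle,
    idealToggleSet_symmDiff (fun x hx => hx.1) (hfar i j (.inl hij)),
    idealToggleSet_symmDiff (fun x hx => hx.1) (hfar j i (.inr hij)), symmDiff_right_comm]

end IdealToggle

section SweepIdeal

variable [PartialOrder α] {rk : α → ℕ}

lemma IsAntichain.not_exists_lt_and_exists_le {s : Set α} (hs : IsAntichain (· ≤ ·) s)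
    (x : α) : ¬ ((∃ a ∈ s, a < x) ∧ ∃ b ∈ s, x ≤ b) :=
  fun ⟨⟨_, ha, hax⟩, _, hb, hxb⟩ => hs.not_lt ha hb (hax.trans_le hxb)

lemma IsAntichain.eq_of_upperClosure_eq {s t : Set α}
    (hs : IsAntichain (· ≤ ·) s) (ht : IsAntichain (· ≤ ·) t)
    (h : upperClosure s = upperClosure t) : s = t := by
  ext x
  rw [← hs.minimal_mem_upperClosure_iff_mem, ← ht.minimal_mem_upperClosure_iff_mem, h]

lemma exists_le_iff_exists_lt_or_mem {s : Set α} {x : α} :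
    (∃ a ∈ s, a ≤ x) ↔ (∃ a ∈ s, a < x) ∨ x ∈ s := by
  simp only [le_iff_lt_or_eq, and_or_left, exists_or, exists_eq_right]

lemma exists_ge_iff_exists_gt_or_mem {s : Set α} {x : α} :
    (∃ a ∈ s, x ≤ a) ↔ (∃ a ∈ s, x < a) ∨ x ∈ s := by
  simp only [le_iff_lt_or_eq, and_or_left, exists_or, exists_eq_right']

variable (rk) in
/-- The common value of `I(𝛕_N ⋯ 𝛕_k s)` and `t_k ⋯ t_N I(s)` for an antichain `s` when all
ranks are at most `N`. -/
def sweepIdeal (k : ℕ) (s : Set α) : Set α :=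
  {x | if rk x < k then x ∉ upperClosure s else x ∈ lowerClosure s}

lemma mem_sweepIdeal_of_lt {k : ℕ} {s : Set α} {x : α} (hx : rk x < k) :
    x ∈ sweepIdeal rk k s ↔ ∀ a ∈ s, ¬ a ≤ x := by
  simp [sweepIdeal, hx]

lemma mem_sweepIdeal_of_le {k : ℕ} {s : Set α} {x : α} (hx : k ≤ rk x) :
    x ∈ sweepIdeal rk k s ↔ ∃ a ∈ s, x ≤ a := by
  simp [sweepIdeal, hx.not_gt]

lemma sweepIdeal_of_forall_lt {k : ℕ} (hk : ∀ x, rk x < k) (s : Set α) :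
    sweepIdeal rk k s = (upperClosure s : Set α)ᶜ := by
  ext x; simp [sweepIdeal, hk x]

lemma idealRankToggle_sweepIdeal [Finite α] (hrk : StrictMono rk) {s : Set α}
    (hs : IsAntichain (· ≤ ·) s) (k : ℕ) :
    idealRankToggle rk k (sweepIdeal rk (k + 1) s) = sweepIdeal rk k s := by
  ext x
  rcases lt_trichotomy (rk x) k with h | rfl | h
  · rw [mem_idealRankToggle_of_ne h.ne, mem_sweepIdeal_of_lt (by omega),
      mem_sweepIdeal_of_lt h]
  · have hup : (∀ y, x ⋖ y → y ∉ sweepIdeal rk (rk x + 1) s) ↔ ¬ ∃ a ∈ s, x < a := by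
      refine ⟨fun h ⟨a, ha, hxa⟩ => ?_, fun h y hxy hy => ?_⟩
      · obtain ⟨y, hxy, hya⟩ := exists_covBy_le_of_lt hxa
        exact h y hxy ((mem_sweepIdeal_of_le (hrk hxy.lt)).2 ⟨a, ha, hya⟩)
      · obtain ⟨a, ha, hya⟩ := (mem_sweepIdeal_of_le (hrk hxy.lt)).1 hy
        exact h ⟨a, ha, hxy.lt.trans_le hya⟩
    have hdown : (∀ y, y ⋖ x → y ∈ sweepIdeal rk (rk x + 1) s) ↔ ¬ ∃ a ∈ s, a < x := by
      refine ⟨fun h ⟨a, ha, hax⟩ => ?_, fun h y hyx => ?_⟩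
      · obtain ⟨y, hay, hyx⟩ := exists_le_covBy_of_lt hax
        exact (mem_sweepIdeal_of_lt (by have := hrk hyx.lt; omega)).1 (h y hyx) a ha hay
      · exact (mem_sweepIdeal_of_lt (by have := hrk hyx.lt; omega)).2
          fun a ha hay => h ⟨a, ha, hay.trans_lt hyx.lt⟩
    have hself : x ∈ sweepIdeal rk (rk x + 1) s ↔ ¬ ∃ a ∈ s, a ≤ x := by
      rw [mem_sweepIdeal_of_lt (by omega)]; simp
    have hgt : x ∈ s → ¬ ∃ a ∈ s, x < a := fun hx ⟨a, ha, hxa⟩ => hs.not_lt hx ha hxa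
    have := hs.not_exists_lt_and_exists_le x
    simp only [idealRankToggle, Set.mem_symmDiff, idealToggleSet, Set.mem_ofPred_eq, true_and,
      hup, hdown, hself, mem_sweepIdeal_of_le le_rfl, exists_le_iff_exists_lt_or_mem,
      exists_ge_iff_exists_gt_or_mem] at this ⊢
    clear hup hdown hself
    generalize (∃ a ∈ s, x < a) = P at hgt this ⊢
    generalize (∃ a ∈ s, a < x) = Q at this ⊢
    tauto
  · rw [mem_idealRankToggle_of_ne h.ne', mem_sweepIdeal_of_le (by omega),
      mem_sweepIdeal_of_le h.le]

end SweepIdeal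

section AntichainToggle

variable [PartialOrder α] {A : Finset α}

lemma toggle_isAntichain (hA : IsAntichain (· ≤ ·) (A : Set α)) (p : α) :
    IsAntichain (· ≤ ·) (toggle p A : Set α) := by
  unfold toggle
  split_ifs with _ h₂
  · exact hA.subset (Finset.coe_subset.2 (Finset.erase_subset _ _))
  · exact h₂
  · exact hA

lemma mem_toggle (hA : IsAntichain (· ≤ ·) (A : Set α)) {p x : α} :
    x ∈ toggle p A ↔ if x = p then ∀ b ∈ A, ¬ b ≤ p ∧ ¬ p ≤ b else x ∈ A := by
  have hins : p ∉ A → (IsAntichain (· ≤ ·) (↑(insert p A) : Set α) ↔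
      ∀ b ∈ A, ¬ b ≤ p ∧ ¬ p ≤ b) := fun hp => by
    rw [Finset.coe_insert, isAntichain_insert]
    exact ⟨fun h b hb => (h.2 hb (ne_of_mem_of_not_mem hb hp).symm).symm, fun h =>
      ⟨hA, fun b hb _ => (h b hb).symm⟩⟩
  by_cases hx : x = p
  · subst hx
    rw [if_pos rfl]
    unfold toggle
    split_ifs with hp hq
    · exact iff_of_false (by simp) fun h => (h x hp).1 le_rfl
    · simpa using (hins hp).1 hq
    · simpa [hp] using mt (hins hp).2 hq
  · rw [if_neg hx]
    unfold toggle
    split_ifs <;> simp [hx]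

lemma isAntichain_foldr_toggle (hA : IsAntichain (· ≤ ·) (A : Set α)) (L : List α) :
    IsAntichain (· ≤ ·) (↑(L.foldr toggle A) : Set α) := by
  induction L with
  | nil => exact hA
  | cons p L ih => exact toggle_isAntichain ih p

lemma mem_foldr_toggle (hA : IsAntichain (· ≤ ·) (A : Set α)) {L : List α} (hnd : L.Nodup)
    (hL : IsAntichain (· ≤ ·) {x | x ∈ L}) (x : α) :
    x ∈ L.foldr toggle A ↔ if x ∈ L then ∀ b ∈ A, ¬ b ≤ x ∧ ¬ x ≤ b else x ∈ A := by
  induction L generalizing x with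
  | nil => simp
  | cons p L ih =>
    obtain ⟨hpL, hnd⟩ := List.nodup_cons.1 hnd
    have ih := ih hnd (hL.subset fun y hy => List.mem_cons_of_mem p hy)
    rw [List.foldr_cons, mem_toggle (isAntichain_foldr_toggle hA L)]
    by_cases hx : x = p
    · subst hx
      have hinc : ∀ b ∈ L, ¬ b ≤ x ∧ ¬ x ≤ b := fun b hb =>
        have hbx : b ≠ x := ne_of_mem_of_not_mem hb hpL
        ⟨hL (List.mem_cons_of_mem x hb) List.mem_cons_self hbx,
          hL List.mem_cons_self (List.mem_cons_of_mem x hb) hbx.symm⟩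
      simp only [if_pos List.mem_cons_self, if_true]
      refine ⟨fun h b hb => ?_, fun h b hb => ?_⟩ <;> by_cases hbL : b ∈ L
      · exact hinc b hbL
      · exact h b ((ih b).2 (by simp [hbL, hb]))
      · exact hinc b hbL
      · exact h b (by simpa [hbL] using (ih b).1 hb)
    · simp [hx, ih x]

end AntichainToggle

section RankToggle

variable [Fintype α] [PartialOrder α] {rk : α → ℕ} {A : Finset α}

lemma rankToggle_isAntichain (hA : IsAntichain (· ≤ ·) (A : Set α)) (i : ℕ) :
    IsAntichain (· ≤ ·) (↑(rankToggle rk i A) : Set α) :=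
  isAntichain_foldr_toggle hA _

lemma mem_rankToggle (hrk : StrictMono rk) (hA : IsAntichain (· ≤ ·) (A : Set α)) {i : ℕ}
    {x : α} :
    x ∈ rankToggle rk i A ↔ if rk x = i then ∀ b ∈ A, ¬ b ≤ x ∧ ¬ x ≤ b else x ∈ A := by
  have hL : IsAntichain (· ≤ ·) {x | x ∈ (Finset.univ.filter (rk · = i)).toList} :=
    fun a ha b hb hab hle => by
      simp only [Finset.mem_toList, Finset.mem_filter, Finset.mem_univ, true_and,
        Set.mem_ofPred_eq] at ha hb
      exact (hrk (lt_of_le_of_ne hle hab)).ne (ha.trans hb.symm)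
  rw [rankToggle, mem_foldr_toggle hA (Finset.nodup_toList _) hL]
  simp

lemma sweepIdeal_rankToggle (hrk : StrictMono rk) (hA : IsAntichain (· ≤ ·) (A : Set α)) (k : ℕ) :
    sweepIdeal rk (k + 1) ↑(rankToggle rk k A) = sweepIdeal rk k ↑A := by
  have hother : ∀ a, rk a ≠ k → (a ∈ (rankToggle rk k A : Set α) ↔ a ∈ (A : Set α)) :=
    fun a ha => by rw [Finset.mem_coe, mem_rankToggle hrk hA, if_neg ha, Finset.mem_coe]
  ext x
  rcases lt_trichotomy (rk x) k with h | rfl | h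
  · rw [mem_sweepIdeal_of_lt (by omega), mem_sweepIdeal_of_lt h]
    refine forall_congr' fun a => ⟨fun ha haA hax => ?_, fun ha haB hax => ?_⟩
    · exact ha ((hother a (by have := hrk.monotone hax; omega)).2 haA) hax
    · exact ha ((hother a (by have := hrk.monotone hax; omega)).1 haB) hax
  · rw [mem_sweepIdeal_of_lt (by omega), mem_sweepIdeal_of_le le_rfl]
    have hbelow : (∀ a ∈ (rankToggle rk (rk x) A : Set α), ¬ a ≤ x) ↔
        x ∉ rankToggle rk (rk x) A ∧ ¬ ∃ a ∈ (A : Set α), a < x := by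
      refine ⟨fun h => ⟨fun hx => h x hx le_rfl, fun ⟨a, ha, hax⟩ =>
        h a ((hother a (hrk hax).ne).2 ha) hax.le⟩, fun ⟨hx, hlt⟩ a ha hax => ?_⟩
      rcases hax.lt_or_eq with hax | rfl
      · exact hlt ⟨a, (hother a (hrk hax).ne).1 ha, hax⟩
      · exact hx ha
    have hself : x ∈ rankToggle rk (rk x) A ↔
        ¬ ((∃ a ∈ (A : Set α), a ≤ x) ∨ ∃ a ∈ (A : Set α), x ≤ a) := by
      simp [mem_rankToggle hrk hA, imp_and, forall_and]
    have := hA.not_exists_lt_and_exists_le x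
    have hgt : x ∈ (A : Set α) → ¬ ∃ a ∈ (A : Set α), x < a :=
      fun hx ⟨a, ha, hxa⟩ => hA.not_lt hx ha hxa
    rw [hbelow, hself]
    simp only [exists_le_iff_exists_lt_or_mem, exists_ge_iff_exists_gt_or_mem] at this ⊢
    clear hbelow hself hother
    generalize (∃ a ∈ (A : Set α), x < a) = P at hgt this ⊢
    generalize (∃ a ∈ (A : Set α), a < x) = Q at this ⊢
    tauto
  · rw [mem_sweepIdeal_of_le (by omega), mem_sweepIdeal_of_le h.le]
    refine exists_congr fun a => ⟨fun ⟨haB, hxa⟩ => ?_, fun ⟨haA, hxa⟩ => ?_⟩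
    · exact ⟨(hother a (by have := hrk.monotone hxa; omega)).1 haB, hxa⟩
    · exact ⟨(hother a (by have := hrk.monotone hxa; omega)).2 haA, hxa⟩

end RankToggle

section Rowvacuation

variable [Fintype α] [PartialOrder α] {rk : α → ℕ}

variable (rk) in
noncomputable def rankSweep (k n : ℕ) (A : Finset α) : Finset α :=
  (List.range' k n).foldl (fun C j => rankToggle rk j C) A

lemma rankSweep_succ (k n : ℕ) (A : Finset α) :
    rankSweep rk k (n + 1) A = rankSweep rk (k + 1) n (rankToggle rk k A) := by
  simp [rankSweep, List.range'_succ]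

lemma rankSweep_isAntichain {A : Finset α} (hA : IsAntichain (· ≤ ·) (A : Set α)) (k n : ℕ) :
    IsAntichain (· ≤ ·) (↑(rankSweep rk k n A) : Set α) := by
  induction n generalizing k A with
  | zero => exact hA
  | succ n ih => rw [rankSweep_succ]; exact ih (rankToggle_isAntichain hA k) (k + 1)

lemma compl_upperClosure_rankSweep (hrk : StrictMono rk) {A : Finset α}
    (hA : IsAntichain (· ≤ ·) (A : Set α)) {k n : ℕ} (hn : ∀ x, rk x < k + n) :
    (upperClosure (↑(rankSweep rk k n A) : Set α) : Set α)ᶜ = sweepIdeal rk k ↑A := by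
  induction n generalizing k A with
  | zero => exact (sweepIdeal_of_forall_lt hn _).symm
  | succ n ih =>
    rw [rankSweep_succ, ih (rankToggle_isAntichain hA k) (fun x => by have := hn x; omega),
      sweepIdeal_rankToggle hrk hA]

lemma sweepProd_apply_compl_upperClosure {g : ℕ → Equiv.Perm (Set α)}
    (hg : ∀ j, ⇑(g j) = idealRankToggle rk j) (hrk : StrictMono rk) {s : Set α}
    (hs : IsAntichain (· ≤ ·) s) {k n : ℕ} (hn : ∀ x, rk x < k + n) :
    sweepProd g k n (upperClosure s : Set α)ᶜ = sweepIdeal rk k s := by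
  induction n generalizing k with
  | zero => exact (sweepIdeal_of_forall_lt hn _).symm
  | succ n ih =>
    rw [sweepProd, Equiv.Perm.mul_apply, ih (fun x => by have := hn x; omega), hg,
      idealRankToggle_sweepIdeal hrk hs]

lemma rvac_isAntichain {A : Finset α} (hA : IsAntichain (· ≤ ·) (A : Set α)) (N : ℕ) :
    IsAntichain (· ≤ ·) (↑(rvac rk N A) : Set α) := by
  suffices ∀ l : List ℕ, ∀ B : Finset α, IsAntichain (· ≤ ·) (B : Set α) →
      IsAntichain (· ≤ ·) (↑(l.foldl (fun C i => rankSweep rk i (N + 1 - i) C) B) : Set α) from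
    this _ A hA
  intro l
  induction l with
  | nil => exact fun _ hB => hB
  | cons i l ih => exact fun B hB => ih _ (rankSweep_isAntichain hB i _)

lemma compl_upperClosure_rvac {g : ℕ → Equiv.Perm (Set α)}
    (hg : ∀ j, ⇑(g j) = idealRankToggle rk j) (hrk : StrictMono rk) {N : ℕ}
    (hN : ∀ x, rk x ≤ N) {A : Finset α} (hA : IsAntichain (· ≤ ·) (A : Set α)) :
    (upperClosure (↑(rvac rk N A) : Set α) : Set α)ᶜ =
      evacProd g 0 (N + 1) (upperClosure (A : Set α) : Set α)ᶜ := by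
  suffices ∀ n k, k + n = N + 1 → ∀ B : Finset α, IsAntichain (· ≤ ·) (B : Set α) →
      (upperClosure
        (↑((List.range' k n).foldl (fun C i => rankSweep rk i (N + 1 - i) C) B) : Set α) :
          Set α)ᶜ = evacProd g k n (upperClosure (B : Set α) : Set α)ᶜ by
    rw [rvac, List.range_eq_range']
    exact this (N + 1) 0 (zero_add _) A hA
  intro n
  induction n with
  | zero => exact fun _ _ _ _ => rfl
  | succ n ih =>
    intro k hk B hB
    have hrank : ∀ x, rk x < k + (n + 1) := fun x => by have := hN x; omega
    rw [List.range'_succ, List.foldl_cons, show N + 1 - k = n + 1 by omega,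
      ih (k + 1) (by omega) _ (rankSweep_isAntichain hB _ _), evacProd, Equiv.Perm.mul_apply,
      compl_upperClosure_rankSweep hrk hB hrank, sweepProd_apply_compl_upperClosure hg hrk hB hrank]

end Rowvacuation

theorem rvac_involution [Fintype α] [PartialOrder α] (rk : α → ℕ)
    (hrk : IsRankFunction rk) (A : Finset α)
    (hA : IsAntichain (· ≤ ·) (↑A : Set α)) :
    IsAntichain (· ≤ ·) (↑(rvac rk (Finset.univ.sup rk) A) : Set α) ∧
    rvac rk (Finset.univ.sup rk) (rvac rk (Finset.univ.sup rk) A) = A := by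
  have hmono := strictMono_of_covBy_succ hrk.2
  let g : ℕ → Equiv.Perm (Set α) := fun j => (idealRankToggle_involutive hmono j).toPerm
  have hg : ∀ j, ⇑(g j) = idealRankToggle rk j := fun _ => rfl
  have hinv : ∀ j, g j * g j = 1 := fun j => Equiv.ext (idealRankToggle_involutive hmono j)
  have hcomm : ∀ i j, i + 2 ≤ j → Commute (g i) (g j) :=
    fun i j hij => Equiv.ext (idealRankToggle_comm hrk.2 hij)
  have hN : ∀ x, rk x ≤ Finset.univ.sup rk := fun x => Finset.le_sup (Finset.mem_univ x)
  have hA' := rvac_isAntichain (rk := rk) hA (Finset.univ.sup rk)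
  refine ⟨hA', Finset.coe_injective ((rvac_isAntichain hA' _).eq_of_upperClosure_eq hA ?_)⟩
  apply SetLike.coe_injective
  rw [← compl_inj_iff, compl_upperClosure_rvac hg hmono hN hA',
    compl_upperClosure_rvac hg hmono hN hA, ← Equiv.Perm.mul_apply,
    evacProd_mul_self hinv hcomm, Equiv.Perm.one_apply]
end

section
/- The map on antichains of Φ⁺(A_{n-1}) sending A = {[i_1,j_1],…,[i_k,j_k]} (with increasing endpoints) to {[i'_1,j'_1],…,[i'_{n-1-k},j'_{n-1-k}]}, where {i'_ℓ} = {1,…,n−1} \ {j_ℓ − 1} and {j'_ℓ} = {2,…,n} \ {i_ℓ + 1}, is a well-defined involution on the set of antichains of Φ⁺(A_{n-1}): its output is an antichain and applying it twice returns A. -/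
/-- Left-endpoint set of the Lalanne–Kreweras image:
`{1,…,n-1} \ {j - 1 : [i,j] ∈ A}`. -/
def lkS (n : ℕ) (A : Finset (ℕ × ℕ)) : Finset ℕ :=
  Finset.Icc 1 (n - 1) \ A.image (fun p => p.2 - 1)

/-- Right-endpoint set of the Lalanne–Kreweras image:
`{2,…,n} \ {i + 1 : [i,j] ∈ A}`. -/
def lkT (n : ℕ) (A : Finset (ℕ × ℕ)) : Finset ℕ :=
  Finset.Icc 2 n \ A.image (fun p => p.1 + 1)

/-!
Sorting an antichain of intervals, both endpoint sequences increase, so the antichain is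
recovered from its two endpoint sets by pairing their `ℓ`-th smallest elements. The image `B`
has left endpoints `lkS n A` and right endpoints `lkT n A`; complementing a second time, after
the shifts `j ↦ j - 1` and `i ↦ i + 1`, returns the endpoint sets of `A`, so applying the map
twice gives `A`. The `ℓ`-th left endpoint of `B` lies below its `ℓ`-th right endpoint by
counting: for every `m`, at most as many right endpoints of `B` are `≤ m` as left endpoints are
`< m`, because an interval of `A` ending by `m` starts before `m`.
-/

open Finset

def IntervalSubset {α β : Type*} [LE α] [LE β] (p q : α × β) : Prop :=
  q.1 ≤ p.1 ∧ p.2 ≤ q.2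

section OrderZip

variable {α β : Type*} [LinearOrder α] [LinearOrder β] {N : ℕ}

def orderZip (S : Finset α) (T : Finset β) (hS : #S = N) (hT : #T = N) : Finset (α × β) :=
  univ.image fun ℓ : Fin N => (S.orderEmbOfFin hS ℓ, T.orderEmbOfFin hT ℓ)

theorem orderZip_congr {S S' : Finset α} {T T' : Finset β} (hSS' : S = S') (hTT' : T = T')
    (hS : #S = N) (hT : #T = N) (hS' : #S' = N) (hT' : #T' = N) :
    orderZip S T hS hT = orderZip S' T' hS' hT' := by
  subst hSS' hTT'; rfl

theorem image_fst_orderZip (S : Finset α) (T : Finset β) (hS : #S = N) (hT : #T = N) :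
    (orderZip S T hS hT).image Prod.fst = S := by
  rw [orderZip, image_image]
  exact image_orderEmbOfFin_univ S hS

theorem image_snd_orderZip (S : Finset α) (T : Finset β) (hS : #S = N) (hT : #T = N) :
    (orderZip S T hS hT).image Prod.snd = T := by
  rw [orderZip, image_image]
  exact image_orderEmbOfFin_univ T hT

theorem isAntichain_orderZip (S : Finset α) (T : Finset β) (hS : #S = N) (hT : #T = N) :
    IsAntichain IntervalSubset (orderZip S T hS hT : Set (α × β)) := by
  rintro _ hp _ hq hne ⟨h₁, h₂⟩
  obtain ⟨a, -, rfl⟩ := mem_image.mp hp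
  obtain ⟨b, -, rfl⟩ := mem_image.mp hq
  have hab : a = b := le_antisymm (by simpa using h₂) (by simpa using h₁)
  exact hne (by rw [hab])

theorem card_filter_eq_card_filter_orderEmbOfFin (S : Finset α) (h : #S = N) (P : α → Prop)
    [DecidablePred P] : #(S.filter P) = #{m : Fin N | P (S.orderEmbOfFin h m)} := by
  conv_lhs => rw [← image_orderEmbOfFin_univ S h]
  rw [filter_image, card_image_of_injective _ (RelEmbedding.injective _)]

theorem card_filter_lt_orderEmbOfFin (S : Finset α) (h : #S = N) (ℓ : Fin N) :
    #{x ∈ S | x < S.orderEmbOfFin h ℓ} = ℓ := by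
  simp [card_filter_eq_card_filter_orderEmbOfFin S h, filter_gt_eq_Iio]

theorem card_filter_le_orderEmbOfFin (S : Finset α) (h : #S = N) (ℓ : Fin N) :
    #{x ∈ S | x ≤ S.orderEmbOfFin h ℓ} = ℓ + 1 := by
  simp [card_filter_eq_card_filter_orderEmbOfFin S h, filter_ge_eq_Iic]

theorem orderEmbOfFin_lt_of_card_filter_le {S T : Finset α} (hS : #S = N) (hT : #T = N)
    (H : ∀ m, #{t ∈ T | t ≤ m} ≤ #{s ∈ S | s < m}) (ℓ : Fin N) :
    S.orderEmbOfFin hS ℓ < T.orderEmbOfFin hT ℓ := by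
  by_contra! hle
  have := calc
    (ℓ : ℕ) + 1 = #{t ∈ T | t ≤ T.orderEmbOfFin hT ℓ} :=
      (card_filter_le_orderEmbOfFin T hT ℓ).symm
    _ ≤ #{s ∈ S | s < T.orderEmbOfFin hT ℓ} := H _
    _ ≤ #{s ∈ S | s < S.orderEmbOfFin hS ℓ} :=
      card_le_card (monotone_filter_right _ fun _ _ h => h.trans_le hle)
    _ = ℓ := card_filter_lt_orderEmbOfFin S hS ℓ
  omega

theorem IsAntichain.injOn_fst {A : Set (α × β)} (hA : IsAntichain IntervalSubset A) :
    Set.InjOn Prod.fst A := by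
  intro p hp q hq h
  rcases le_total p.2 q.2 with h₂ | h₂
  · exact hA.eq hp hq ⟨h.ge, h₂⟩
  · exact (hA.eq hq hp ⟨h.le, h₂⟩).symm

theorem IsAntichain.lt_and_lt_of_toLex_lt {A : Set (α × β)} (hA : IsAntichain IntervalSubset A)
    {p q : α × β} (hp : p ∈ A) (hq : q ∈ A) (hpq : toLex p < toLex q) :
    p.1 < q.1 ∧ p.2 < q.2 := by
  rcases Prod.Lex.toLex_lt_toLex.mp hpq with h₁ | ⟨h₁, h₂⟩
  · exact ⟨h₁, lt_of_not_ge fun h₂ =>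
      h₁.ne' (congrArg Prod.fst (hA.eq hq hp ⟨h₁.le, h₂⟩))⟩
  · exact absurd (congrArg Prod.snd (hA.eq hp hq ⟨h₁.ge, h₂.le⟩)) h₂.ne

theorem orderZip_image_fst_image_snd {A : Finset (α × β)}
    (hA : IsAntichain IntervalSubset (A : Set (α × β)))
    (hS : #(A.image Prod.fst) = N) (hT : #(A.image Prod.snd) = N) :
    orderZip (A.image Prod.fst) (A.image Prod.snd) hS hT = A := by
  have hcard : #(A.map toLex.toEmbedding) = N := by
    rw [card_map, ← hS, card_image_of_injOn hA.injOn_fst]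
  set e := (A.map toLex.toEmbedding).orderEmbOfFin hcard
  have he : ∀ ℓ, ofLex (e ℓ) ∈ A := fun ℓ => by
    simpa using (A.map toLex.toEmbedding).orderEmbOfFin_mem hcard ℓ
  have hmono : ∀ a b, a < b →
      (ofLex (e a)).1 < (ofLex (e b)).1 ∧ (ofLex (e a)).2 < (ofLex (e b)).2 :=
    fun a b hab => hA.lt_and_lt_of_toLex_lt (he a) (he b) (e.strictMono hab)
  have h₁ : (fun ℓ => (ofLex (e ℓ)).1) = (A.image Prod.fst).orderEmbOfFin hS :=
    orderEmbOfFin_unique hS (fun ℓ => mem_image_of_mem _ (he ℓ)) fun a b h => (hmono a b h).1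
  have h₂ : (fun ℓ => (ofLex (e ℓ)).2) = (A.image Prod.snd).orderEmbOfFin hT :=
    orderEmbOfFin_unique hT (fun ℓ => mem_image_of_mem _ (he ℓ)) fun a b h => (hmono a b h).2
  calc orderZip (A.image Prod.fst) (A.image Prod.snd) hS hT = univ.image (ofLex ∘ e) := by
        simp only [orderZip, ← h₁, ← h₂]; rfl
    _ = A := by
        rw [← image_image, image_orderEmbOfFin_univ]; ext; simp

end OrderZip

theorem Finset.card_filter_sdiff {α : Type*} [DecidableEq α] {s t : Finset α} (h : s ⊆ t)
    (P : α → Prop) [DecidablePred P] :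
    #{x ∈ t \ s | P x} = #{x ∈ t | P x} - #{x ∈ s | P x} := by
  rw [← card_sdiff_of_subset (filter_subset_filter P h)]
  congr 1
  ext
  simp only [mem_filter, mem_sdiff]
  tauto

section LalanneKreweras

variable {n : ℕ} {A : Finset (ℕ × ℕ)}

theorem image_sub_one_lkT :
    (lkT n A).image (· - 1) = Icc 1 (n - 1) \ A.image Prod.fst := by
  ext x
  simp only [lkT, mem_image, mem_sdiff, mem_Icc, not_exists, not_and]
  constructor
  · rintro ⟨y, ⟨⟨hy₁, hy₂⟩, hy⟩, rfl⟩
    exact ⟨⟨by omega, by omega⟩, fun p hp h => hy p hp (by omega)⟩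
  · rintro ⟨⟨hx₁, hx₂⟩, hx⟩
    exact ⟨x + 1, ⟨⟨by omega, by omega⟩, fun p hp h => hx p hp (by omega)⟩, rfl⟩

theorem image_add_one_lkS :
    (lkS n A).image (· + 1) = Icc 2 n \ A.image Prod.snd := by
  ext x
  simp only [lkS, mem_image, mem_sdiff, mem_Icc, not_exists, not_and]
  constructor
  · rintro ⟨y, ⟨⟨hy₁, hy₂⟩, hy⟩, rfl⟩
    exact ⟨⟨by omega, by omega⟩, fun p hp h => hy p hp (by omega)⟩
  · rintro ⟨⟨hx₁, hx₂⟩, hx⟩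
    exact ⟨x - 1, ⟨⟨by omega, by omega⟩, fun p hp h => hx p hp (by omega)⟩, by omega⟩

theorem card_filter_lkT_le_card_filter_lkS
    (hval : ∀ p ∈ A, 1 ≤ p.1 ∧ p.1 < p.2 ∧ p.2 ≤ n)
    (hA : Set.InjOn Prod.fst (A : Set (ℕ × ℕ))) (m : ℕ) :
    #{t ∈ lkT n A | t ≤ m} ≤ #{s ∈ lkS n A | s < m} := by
  have hI : A.image (·.1 + 1) ⊆ Icc 2 n := fun i hi => by
    obtain ⟨p, hp, rfl⟩ := mem_image.mp hi
    have := hval p hp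
    simp only [mem_Icc]; omega
  have hJ : A.image (·.2 - 1) ⊆ Icc 1 (n - 1) := fun j hj => by
    obtain ⟨p, hp, rfl⟩ := mem_image.mp hj
    have := hval p hp
    simp only [mem_Icc]; omega
  have hIcc : #{x ∈ Icc 2 n | x ≤ m} = #{x ∈ Icc 1 (n - 1) | x < m} := by
    rw [show {x ∈ Icc 2 n | x ≤ m} = Icc 2 (min n m) by ext; simp; omega,
      show {x ∈ Icc 1 (n - 1) | x < m} = Icc 1 (min (n - 1) (m - 1)) by ext; simp; omega]
    simp only [Nat.card_Icc]
    omega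
  have hAJ : #{j ∈ A.image (·.2 - 1) | j < m} ≤ #{i ∈ A.image (·.1 + 1) | i ≤ m} := calc
    _ ≤ #{p ∈ A | p.2 - 1 < m} := by rw [filter_image]; exact card_image_le
    _ ≤ #{p ∈ A | p.1 + 1 ≤ m} :=
      card_le_card (monotone_filter_right _ fun p hp h => by have := hval p hp; omega)
    _ = #{i ∈ A.image (·.1 + 1) | i ≤ m} := by
      rw [filter_image, card_image_of_injOn fun p hp q hq h =>
        hA (mem_filter.1 hp).1 (mem_filter.1 hq).1 (Nat.succ_injective h)]
  rw [lkT, lkS, card_filter_sdiff hI, card_filter_sdiff hJ]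
  omega

theorem lkS_orderZip (hval : ∀ p ∈ A, 1 ≤ p.1 ∧ p.1 < p.2 ∧ p.2 ≤ n) {N : ℕ}
    (hS : #(lkS n A) = N) (hT : #(lkT n A) = N) :
    lkS n (orderZip (lkS n A) (lkT n A) hS hT) = A.image Prod.fst := by
  rw [lkS, show (fun p : ℕ × ℕ => p.2 - 1) = (· - 1) ∘ Prod.snd from rfl, ← image_image,
    image_snd_orderZip, image_sub_one_lkT, Finset.sdiff_sdiff_eq_self]
  intro i hi
  obtain ⟨p, hp, rfl⟩ := mem_image.mp hi
  have := hval p hp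
  simp only [mem_Icc]; omega

theorem lkT_orderZip (hval : ∀ p ∈ A, 1 ≤ p.1 ∧ p.1 < p.2 ∧ p.2 ≤ n) {N : ℕ}
    (hS : #(lkS n A) = N) (hT : #(lkT n A) = N) :
    lkT n (orderZip (lkS n A) (lkT n A) hS hT) = A.image Prod.snd := by
  rw [lkT, show (fun p : ℕ × ℕ => p.1 + 1) = (· + 1) ∘ Prod.fst from rfl, ← image_image,
    image_fst_orderZip, image_add_one_lkS, Finset.sdiff_sdiff_eq_self]
  intro j hj
  obtain ⟨p, hp, rfl⟩ := mem_image.mp hj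
  have := hval p hp
  simp only [mem_Icc]; omega

end LalanneKreweras

theorem lk_involution_general (n k : ℕ) (A B : Finset (ℕ × ℕ))
    (hval : ∀ p ∈ A, 1 ≤ p.1 ∧ p.1 < p.2 ∧ p.2 ≤ n)
    (hanti : ∀ p ∈ A, ∀ q ∈ A, p ≠ q → ¬ (q.1 ≤ p.1 ∧ p.2 ≤ q.2))
    (hS : (lkS n A).card = n - 1 - k) (hT : (lkT n A).card = n - 1 - k)
    (hB : B = Finset.image
      (fun ℓ : Fin (n - 1 - k) =>
        (((lkS n A).orderEmbOfFin hS ℓ : ℕ), ((lkT n A).orderEmbOfFin hT ℓ : ℕ)))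
      Finset.univ) :
    (∀ p ∈ B, 1 ≤ p.1 ∧ p.1 < p.2 ∧ p.2 ≤ n) ∧
    (∀ p ∈ B, ∀ q ∈ B, p ≠ q → ¬ (q.1 ≤ p.1 ∧ p.2 ≤ q.2)) ∧
    (∀ (hS' : (lkS n B).card = k) (hT' : (lkT n B).card = k),
      Finset.image
        (fun ℓ : Fin k =>
          (((lkS n B).orderEmbOfFin hS' ℓ : ℕ), ((lkT n B).orderEmbOfFin hT' ℓ : ℕ)))
        Finset.univ = A) := by
  have hA : IsAntichain IntervalSubset (A : Set (ℕ × ℕ)) := hanti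
  replace hB : B = orderZip (lkS n A) (lkT n A) hS hT := hB
  subst hB
  refine ⟨fun p hp => ?_, isAntichain_orderZip _ _ hS hT, fun hS' hT' => ?_⟩
  · obtain ⟨ℓ, -, rfl⟩ := mem_image.mp hp
    have hi := mem_Icc.mp (mem_sdiff.mp ((lkS n A).orderEmbOfFin_mem hS ℓ)).1
    have hj := mem_Icc.mp (mem_sdiff.mp ((lkT n A).orderEmbOfFin_mem hT ℓ)).1
    exact ⟨hi.1, orderEmbOfFin_lt_of_card_filter_le hS hT
      (card_filter_lkT_le_card_filter_lkS hval hA.injOn_fst) ℓ, hj.2⟩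
  · have hSB := lkS_orderZip hval hS hT
    have hTB := lkT_orderZip hval hS hT
    have hS'' : #(A.image Prod.fst) = k := hSB ▸ hS'
    have hT'' : #(A.image Prod.snd) = k := hTB ▸ hT'
    exact (orderZip_congr hSB hTB hS' hT' hS'' hT'').trans
      (orderZip_image_fst_image_snd hA hS'' hT'')

/-- The Lalanne–Kreweras map on antichains of the type `A_{n-1}` root poset
(intervals `[i,j]`, `1 ≤ i < j ≤ n`, ordered by containment, represented as
pairs in `ℕ × ℕ`), sending an antichain `A` of cardinality `k` to the family
obtained by pairing the increasing enumerations of `lkS n A` and `lkT n A`, is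
a well-defined involution: its output `B` consists of valid intervals, `B` is
an antichain, and applying the map to `B` returns `A`. -/
theorem lk_involution (n k : ℕ) (A B : Finset (ℕ × ℕ))
    (hval : ∀ p ∈ A, 1 ≤ p.1 ∧ p.1 < p.2 ∧ p.2 ≤ n)
    (hanti : ∀ p ∈ A, ∀ q ∈ A, p ≠ q → ¬ (q.1 ≤ p.1 ∧ p.2 ≤ q.2))
    (hk : A.card = k)
    (hS : (lkS n A).card = n - 1 - k) (hT : (lkT n A).card = n - 1 - k)
    (hB : B = Finset.image
      (fun ℓ : Fin (n - 1 - k) =>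
        (((lkS n A).orderEmbOfFin hS ℓ : ℕ), ((lkT n A).orderEmbOfFin hT ℓ : ℕ)))
      Finset.univ) :
    (∀ p ∈ B, 1 ≤ p.1 ∧ p.1 < p.2 ∧ p.2 ≤ n) ∧
    (∀ p ∈ B, ∀ q ∈ B, p ≠ q → ¬ (q.1 ≤ p.1 ∧ p.2 ≤ q.2)) ∧
    (∀ (hS' : (lkS n B).card = k) (hT' : (lkT n B).card = k),
      Finset.image
        (fun ℓ : Fin k =>
          (((lkS n B).orderEmbOfFin hS' ℓ : ℕ), ((lkT n B).orderEmbOfFin hT' ℓ : ℕ)))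
        Finset.univ = A) :=
  lk_involution_general n k A B hval hanti hS hT hB
end

section
/- In the Weyl group W of a crystallographic root system with a fixed bipartite Coxeter element c = c_L c_R (where c_L and c_R are products of the simple reflections over a bipartition of the Coxeter diagram), the map Flip(w) = c_L w^{-1} c_L^{-1} is an involution on the noncrossing partition lattice NC(W,c) = [e,c] in absolute order, and it satisfies Flip ∘ Krew = Krew^{-1} ∘ Flip, where Krew(w) = c w^{-1} is the Kreweras complement. -/
open scoped Classical

/-- The absolute length of `w`: the minimal length of an expression of `w`
as a product of reflections. -/
noncomputable def absLength {B W : Type*} [Group W] {M : CoxeterMatrix B}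
    (cs : CoxeterSystem M W) (w : W) : ℕ :=
  sInf {m : ℕ | ∃ l : List W, (∀ t ∈ l, cs.IsReflection t) ∧ l.length = m ∧ l.prod = w}

/-- The absolute order: `u ≤ w` iff `ℓ_T(w) = ℓ_T(u) + ℓ_T(u⁻¹ w)`. -/
def AbsLe {B W : Type*} [Group W] {M : CoxeterMatrix B}
    (cs : CoxeterSystem M W) (u w : W) : Prop :=
  absLength cs u + absLength cs (u⁻¹ * w) = absLength cs w

/-
Absolute length is invariant under conjugation and under inversion, since the set of reflections
is closed under both. As `c_L` and `c_R` are involutions, `Flip(w) = c_L w⁻¹ c_L` and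
`Flip(w)⁻¹ c = c_R (w⁻¹ c)⁻¹ c_R` are conjugates of inverses of `w` and `w⁻¹ c` respectively, so the
defining equation `ℓ_T(w) + ℓ_T(w⁻¹ c) = ℓ_T(c)` of `w ≤ c` transfers to `Flip(w)`. The remaining
two identities are formal consequences of `c_L² = c_R² = 1`.
-/

theorem Finset.noncommProd_mul_self_eq_one {ι G : Type*} [Monoid G] (s : Finset ι) (f : ι → G)
    (comm : (s : Set ι).Pairwise fun i j => Commute (f i) (f j))
    (hf : ∀ i ∈ s, f i * f i = 1) :
    s.noncommProd f comm * s.noncommProd f comm = 1 := by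
  rw [← Finset.noncommProd_mul_distrib f f comm comm comm]
  exact (s.noncommProd_eq_pow_card (f * f) _ 1 hf).trans (one_pow _)

section AbsoluteLength

variable {B W : Type*} [Group W] {M : CoxeterMatrix B} (cs : CoxeterSystem M W)

theorem exists_reflection_list_length_eq_absLength (w : W) :
    ∃ l : List W, (∀ t ∈ l, cs.IsReflection t) ∧ l.length = absLength cs w ∧ l.prod = w := by
  have hne : {m : ℕ | ∃ l : List W,
      (∀ t ∈ l, cs.IsReflection t) ∧ l.length = m ∧ l.prod = w}.Nonempty := by
    obtain ⟨ω, rfl⟩ := cs.wordProd_surjective w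
    refine ⟨ω.length, ω.map cs.simple, ?_, List.length_map _, rfl⟩
    simp only [List.mem_map]
    rintro t ⟨i, -, rfl⟩
    exact cs.isReflection_simple i
  exact Nat.sInf_mem hne

theorem absLength_prod_le {l : List W} (hl : ∀ t ∈ l, cs.IsReflection t) :
    absLength cs l.prod ≤ l.length :=
  Nat.sInf_le ⟨l, hl, rfl, rfl⟩

theorem absLength_conj_le (g w : W) : absLength cs (g * w * g⁻¹) ≤ absLength cs w := by
  obtain ⟨l, hl, hlen, rfl⟩ := exists_reflection_list_length_eq_absLength cs w
  have hconj : g * l.prod * g⁻¹ = (l.map (MulAut.conj g)).prod := by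
    rw [← map_list_prod, MulAut.conj_apply]
  rw [hconj, ← hlen, ← List.length_map (MulAut.conj g)]
  refine absLength_prod_le cs ?_
  simp only [List.mem_map, MulAut.conj_apply]
  rintro t ⟨u, hu, rfl⟩
  exact (hl u hu).conj g

theorem absLength_conj (g w : W) : absLength cs (g * w * g⁻¹) = absLength cs w := by
  refine le_antisymm (absLength_conj_le cs g w) ?_
  simpa [mul_assoc] using absLength_conj_le cs g⁻¹ (g * w * g⁻¹)

theorem absLength_inv_le (w : W) : absLength cs w⁻¹ ≤ absLength cs w := by
  obtain ⟨l, hl, hlen, rfl⟩ := exists_reflection_list_length_eq_absLength cs w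
  rw [List.prod_inv_reverse, ← hlen, ← List.length_map (· ⁻¹), ← List.length_reverse]
  refine absLength_prod_le cs ?_
  simp only [List.mem_reverse, List.mem_map]
  rintro t ⟨u, hu, rfl⟩
  rw [(hl u hu).inv]
  exact hl u hu

theorem absLength_inv (w : W) : absLength cs w⁻¹ = absLength cs w :=
  le_antisymm (absLength_inv_le cs w) (by simpa using absLength_inv_le cs w⁻¹)

theorem absLength_conj_inv (g w : W) : absLength cs (g * w⁻¹ * g⁻¹) = absLength cs w := by
  rw [absLength_conj, absLength_inv]

theorem absLe_conj_inv_of_mul_self {a b w : W} (ha : a * a = 1) (hb : b * b = 1)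
    (hw : AbsLe cs w (a * b)) : AbsLe cs (a * w⁻¹ * a⁻¹) (a * b) := by
  have hinv : (a * w⁻¹ * a⁻¹)⁻¹ * (a * b) = b * (w⁻¹ * (a * b))⁻¹ * b⁻¹ :=
    calc (a * w⁻¹ * a⁻¹)⁻¹ * (a * b) = a * w * b := by group
      _ = a⁻¹ * w * b⁻¹ := by rw [inv_eq_of_mul_eq_one_right ha, inv_eq_of_mul_eq_one_right hb]
      _ = b * (w⁻¹ * (a * b))⁻¹ * b⁻¹ := by group
  unfold AbsLe at hw ⊢
  rw [hinv, absLength_conj_inv, absLength_conj_inv, hw]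

end AbsoluteLength

theorem conj_inv_mul_inv_eq_of_mul_self {G : Type*} [Group G] {a b : G}
    (ha : a * a = 1) (hb : b * b = 1) (w : G) :
    a * (a * b * w⁻¹)⁻¹ * a⁻¹ = (a * w⁻¹ * a⁻¹)⁻¹ * (a * b) :=
  calc a * (a * b * w⁻¹)⁻¹ * a⁻¹ = a * w * b⁻¹ * (a * a)⁻¹ := by group
    _ = a * w * b := by rw [ha, inv_eq_of_mul_eq_one_right hb, inv_one, mul_one]
    _ = (a * w⁻¹ * a⁻¹)⁻¹ * (a * b) := by group

theorem conj_inv_conj_inv_of_mul_self {G : Type*} [Group G] {a : G} (ha : a * a = 1) (w : G) :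
    a * (a * w⁻¹ * a⁻¹)⁻¹ * a⁻¹ = w :=
  calc a * (a * w⁻¹ * a⁻¹)⁻¹ * a⁻¹ = a * a * w * (a * a)⁻¹ := by group
    _ = w := by rw [ha, one_mul, inv_one, mul_one]

theorem flip_involution_and_krew_general {B W : Type*} [Group W]
    [Fintype B] [DecidableEq B] {M : CoxeterMatrix B} (cs : CoxeterSystem M W)
    (L : Finset B)
    (hL : (↑L : Set B).Pairwise fun i j => Commute (cs.simple i) (cs.simple j))
    (hR : (↑(Lᶜ) : Set B).Pairwise fun i j => Commute (cs.simple i) (cs.simple j))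
    (cL cR c : W) (hcL : cL = L.noncommProd cs.simple hL)
    (hcR : cR = Lᶜ.noncommProd cs.simple hR) (hc : c = cL * cR) :
    (∀ w : W, AbsLe cs w c → AbsLe cs (cL * w⁻¹ * cL⁻¹) c) ∧
    (∀ w : W, cL * (cL * w⁻¹ * cL⁻¹)⁻¹ * cL⁻¹ = w) ∧
    (∀ w : W, cL * (c * w⁻¹)⁻¹ * cL⁻¹ = (cL * w⁻¹ * cL⁻¹)⁻¹ * c) := by
  have hL2 : cL * cL = 1 :=
    hcL ▸ L.noncommProd_mul_self_eq_one _ hL fun i _ => cs.simple_mul_simple_self i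
  have hR2 : cR * cR = 1 :=
    hcR ▸ Lᶜ.noncommProd_mul_self_eq_one _ hR fun i _ => cs.simple_mul_simple_self i
  subst hc
  exact ⟨fun w => absLe_conj_inv_of_mul_self cs hL2 hR2, conj_inv_conj_inv_of_mul_self hL2,
    conj_inv_mul_inv_eq_of_mul_self hL2 hR2⟩

/-- In the Weyl group of a crystallographic root system with bipartite Coxeter
element `c = c_L c_R`, the map `Flip(w) = c_L w⁻¹ c_L⁻¹` is an involution on the
noncrossing partition lattice `NC(W,c) = [e,c]` (it maps `NC(W,c)` to itself and
squares to the identity), and `Flip ∘ Krew = Krew⁻¹ ∘ Flip`, where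
`Krew(w) = c w⁻¹` (so `Krew⁻¹(v) = v⁻¹ c`). -/
theorem flip_involution_and_krew {B W : Type*} [Group W] [Finite W]
    [Fintype B] [DecidableEq B] {M : CoxeterMatrix B} (cs : CoxeterSystem M W)
    (hcrys : ∀ i j : B, i ≠ j → M i j ∈ ({2, 3, 4, 6} : Set ℕ))
    (L : Finset B)
    (hL : (↑L : Set B).Pairwise fun i j => Commute (cs.simple i) (cs.simple j))
    (hR : (↑(Lᶜ) : Set B).Pairwise fun i j => Commute (cs.simple i) (cs.simple j))
    (cL cR c : W) (hcL : cL = L.noncommProd cs.simple hL)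
    (hcR : cR = Lᶜ.noncommProd cs.simple hR) (hc : c = cL * cR) :
    (∀ w : W, AbsLe cs w c → AbsLe cs (cL * w⁻¹ * cL⁻¹) c) ∧
    (∀ w : W, cL * (cL * w⁻¹ * cL⁻¹)⁻¹ * cL⁻¹ = w) ∧
    (∀ w : W, cL * (c * w⁻¹)⁻¹ * cL⁻¹ = (cL * w⁻¹ * cL⁻¹)⁻¹ * c) :=
  flip_involution_and_krew_general cs L hL hR cL cR c hcL hcR hc
end
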